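/- Let F be a finite field, p a prime different from char(F), and C = C^⊥ ⊆ F^n a self-dual code (standard bilinear form) invariant under the coordinate permutation σ with cycles (1,…,p),…,((t−1)p+1,…,tp) and fixed points tp+1,…,n (f = n − tp). Let K* = {(c_{tp+1},…,c_n) ∈ F^f : (0,…,0,c_{tp+1},…,c_n) ∈ C} be the code of fixed-point parts of codewords of the fixed code C(σ) vanishing on all cycles. Then dim_F K* ≥ (f − t)/2 and every nonzero word of K* has Hamming weight at least d(C). -/

import Mathlib

open Finset

/-- The linear action of a coordinate permutation on `F^n`: `(π x) i = x (π⁻¹ i)`. -/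
def permLinear {F : Type*} [Field F] {n : ℕ} (π : Equiv.Perm (Fin n)) :
    (Fin n → F) →ₗ[F] (Fin n → F) where
  toFun x := fun i => x (π⁻¹ i)
  map_add' _ _ := rfl
  map_smul' _ _ := rfl

/-- Self-duality with respect to a bilinear form given as a function. -/
def IsSelfDualWith {F : Type*} [Field F] {n : ℕ}
    (B : (Fin n → F) → (Fin n → F) → F) (C : Submodule F (Fin n → F)) : Prop :=
  ∀ x, x ∈ C ↔ ∀ c ∈ C, B x c = 0

/-- The standard bilinear form `∑ i, x i * y i`. -/
def stdB {F : Type*} [Field F] {n : ℕ} (x y : Fin n → F) : F := ∑ i, x i * y i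

/-- The embedding `F^f → F^(pt+f)`, `y ↦ (0,…,0,y)`, putting `y` on the last `f`
coordinates. -/
def embLast {F : Type*} [Field F] (p t f : ℕ) :
    (Fin f → F) →ₗ[F] (Fin (p * t + f) → F) where
  toFun y i :=
    if h : p * t ≤ (i : ℕ) then y ⟨(i : ℕ) - p * t, by have := i.isLt; omega⟩
    else 0
  map_add' x y := by
    funext i; by_cases h : p * t ≤ (i : ℕ) <;> simp [h]
  map_smul' c x := by
    funext i; by_cases h : p * t ≤ (i : ℕ) <;> simp [h]

/-!
Compress coordinates along the cycles of `σ`: the `σ`-fixed vectors are exactly the lifts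
`u ∘ cycleIndex` of `u ∈ F^(t+f)`, and the fixed code `C(σ)` becomes `D = {u : lift u ∈ C}`.
If a fixed `x` is orthogonal to `C(σ)` and `c ∈ C`, the trace `∑_{k<p} σ^k c` lies in `C(σ)` and
pairs with `x` to `p ⟨x, c⟩`; as `p ≠ 0` in `F`, `x ∈ C^⊥ = C`. Hence `D` contains its orthogonal
for the pulled-back form, so `dim D ≥ (t+f)/2`. The words of `D` vanishing on the `t` cycle
coordinates are `K*`, so `dim K* ≥ dim D - t`; and `(0,…,0,y)` has the weight of `y`.
-/

open Module

theorem Nat.mul_add_div_of_lt {p q r : ℕ} (hr : r < p) : (p * q + r) / p = q := by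
  rw [Nat.mul_add_div (by omega), Nat.div_eq_of_lt hr, add_zero]

theorem LinearMap.BilinForm.finrank_le_two_mul_finrank_of_orthogonal_le {K V : Type*} [Field K]
    [AddCommGroup V] [Module K V] [FiniteDimensional K V] {B : LinearMap.BilinForm K V}
    {W : Submodule K V} (h : B.orthogonal W ≤ W) : finrank K V ≤ 2 * finrank K W := by
  have := B.finrank_add_finrank_orthogonal' W
  have := Submodule.finrank_mono h
  omega

theorem Submodule.finrank_add_finrank_le_finrank_comap_add {K V W : Type*} [Field K]
    [AddCommGroup V] [Module K V] [FiniteDimensional K V] [AddCommGroup W] [Module K W]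
    [FiniteDimensional K W] (E : W →ₗ[K] V) (D : Submodule K V) :
    finrank K D + finrank K W ≤ finrank K (D.comap E) + finrank K V := by
  have hker : LinearMap.ker (D.mkQ ∘ₗ E) = D.comap E := by
    rw [LinearMap.ker_comp, Submodule.ker_mkQ]
  have := (D.mkQ ∘ₗ E).finrank_range_add_finrank_ker
  have := Submodule.finrank_le (LinearMap.range (D.mkQ ∘ₗ E))
  have := D.finrank_quotient_add_finrank
  rw [hker] at *
  omega

section FixedCode

variable {F : Type*} [Field F] {n : ℕ}

theorem permLinear_apply (π : Equiv.Perm (Fin n)) (x : Fin n → F) (i : Fin n) :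
    permLinear π x i = x (π⁻¹ i) := rfl

theorem permLinear_mul (π τ : Equiv.Perm (Fin n)) :
    (permLinear (π * τ) : (Fin n → F) →ₗ[F] _) = permLinear π * permLinear τ :=
  LinearMap.ext fun x => funext fun i => congrArg x (by rw [mul_inv_rev]; rfl)

theorem permLinear_one : (permLinear 1 : (Fin n → F) →ₗ[F] _) = 1 :=
  LinearMap.ext fun _ => rfl

theorem permLinear_pow (π : Equiv.Perm (Fin n)) (k : ℕ) :
    (permLinear (π ^ k) : (Fin n → F) →ₗ[F] _) = permLinear π ^ k := by
  induction k with
  | zero => exact permLinear_one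
  | succ k ih => rw [pow_succ, permLinear_mul, ih, pow_succ]

theorem stdB_permLinear_permLinear (π : Equiv.Perm (Fin n)) (x y : Fin n → F) :
    stdB (permLinear π x) (permLinear π y) = stdB x y :=
  Equiv.sum_comp π⁻¹ fun i => x i * y i

variable {σ : Equiv.Perm (Fin n)}

theorem permLinear_pow_apply_of_fixed {x : Fin n → F} (hx : permLinear σ x = x) (k : ℕ) :
    permLinear (σ ^ k) x = x := by
  rw [permLinear_pow, Module.End.pow_apply, Function.iterate_fixed hx]

theorem permLinear_pow_mem {C : Submodule F (Fin n → F)} (hinv : C.map (permLinear σ) = C)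
    (k : ℕ) {c : Fin n → F} (hc : c ∈ C) : permLinear (σ ^ k) c ∈ C := by
  induction k with
  | zero => rwa [pow_zero, permLinear_one]
  | succ k ih =>
    rw [pow_succ', permLinear_mul, Module.End.mul_apply, ← hinv]
    exact Submodule.mem_map_of_mem ih

theorem permLinear_sum_range_pow {p : ℕ} (hσp : σ ^ p = 1) (c : Fin n → F) :
    permLinear σ (∑ k ∈ range p, permLinear (σ ^ k) c) = ∑ k ∈ range p, permLinear (σ ^ k) c := by
  have hshift : permLinear σ (∑ k ∈ range p, permLinear (σ ^ k) c)
      = ∑ k ∈ range p, permLinear (σ ^ (k + 1)) c := by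
    simp only [map_sum, pow_succ', permLinear_mul, Module.End.mul_apply]
  have := sum_range_succ' (fun k => permLinear (σ ^ k) c) p
  rw [sum_range_succ, hσp, ← pow_zero σ, add_left_inj] at this
  rw [hshift, ← this]

theorem stdB_sum_range_pow {x : Fin n → F} (hx : permLinear σ x = x) (p : ℕ) (c : Fin n → F) :
    stdB x (∑ k ∈ range p, permLinear (σ ^ k) c) = p * stdB x c := by
  have hk (k : ℕ) : stdB x (permLinear (σ ^ k) c) = stdB x c := by
    conv_lhs => rw [← permLinear_pow_apply_of_fixed hx k]
    exact stdB_permLinear_permLinear _ x c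
  calc stdB x (∑ k ∈ range p, permLinear (σ ^ k) c)
      = ∑ k ∈ range p, stdB x (permLinear (σ ^ k) c) := dotProduct_sum _ _ _
    _ = p * stdB x c := by simp [hk]

/-- The trace `∑_{k<p} σ^k c` of a codeword `c` is a fixed codeword, and a fixed vector pairs
with it to `p` times its pairing with `c`. -/
theorem mem_of_stdB_fixedCode_eq_zero {C : Submodule F (Fin n → F)} (hsd : IsSelfDualWith stdB C)
    (hinv : C.map (permLinear σ) = C) {p : ℕ} (hσp : σ ^ p = 1) (hp : (p : F) ≠ 0)
    {x : Fin n → F} (hx : permLinear σ x = x)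
    (horth : ∀ y ∈ C, permLinear σ y = y → stdB x y = 0) : x ∈ C := by
  refine (hsd x).2 fun c hc => ?_
  have htrace := horth _ (Submodule.sum_mem _ fun k _ => permLinear_pow_mem hinv k hc)
    (permLinear_sum_range_pow hσp c)
  rw [stdB_sum_range_pow hx] at htrace
  exact (mul_eq_zero.mp htrace).resolve_left hp

/-- With `L` parametrising the fixed vectors, `C.comap L` parametrises the fixed code `C(σ)`;
it contains its orthogonal for the pulled-back form, so it has at least half the dimension. -/
theorem finrank_le_two_mul_finrank_comap {V : Type*} [AddCommGroup V] [Module F V]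
    [FiniteDimensional F V] {C : Submodule F (Fin n → F)} (hsd : IsSelfDualWith stdB C)
    (hinv : C.map (permLinear σ) = C) {p : ℕ} (hσp : σ ^ p = 1) (hp : (p : F) ≠ 0)
    (L : V →ₗ[F] Fin n → F) (hL : ∀ v, permLinear σ (L v) = L v)
    (hfix : ∀ x, permLinear σ x = x → x ∈ LinearMap.range L) :
    finrank F V ≤ 2 * finrank F (C.comap L) := by
  apply LinearMap.BilinForm.finrank_le_two_mul_finrank_of_orthogonal_le
    (B := (dotProductBilin F F).compl₁₂ L L)
  intro u hu
  rw [LinearMap.BilinForm.mem_orthogonal_iff] at hu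
  refine mem_of_stdB_fixedCode_eq_zero hsd hinv hσp hp (hL u) fun y hy hyfix => ?_
  obtain ⟨v, rfl⟩ := hfix y hyfix
  have := hu v hy
  simp only [LinearMap.compl₁₂_apply, dotProductBilin_apply_apply] at this
  rwa [stdB, ← dotProduct, dotProduct_comm]

end FixedCode

section CyclePermutation

variable {F : Type*} [Field F] {p t f : ℕ}

/-- `σ` rotates each block `[p * j, p * j + p)`, `j < t`, by one step and fixes the last `f`
coordinates. -/
def IsBlockRotation (σ : Equiv.Perm (Fin (p * t + f))) : Prop :=
  ∀ i : Fin (p * t + f), (σ i : ℕ) =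
    if (i : ℕ) < p * t then p * ((i : ℕ) / p) + (((i : ℕ) % p + 1) % p) else (i : ℕ)

/-- The cycle (`inl`) or fixed point (`inr`) of `σ` containing a coordinate. -/
def cycleIndex (p t f : ℕ) (i : Fin (p * t + f)) : Fin t ⊕ Fin f :=
  if h : (i : ℕ) < p * t then .inl ⟨i / p, Nat.div_lt_of_lt_mul h⟩
  else .inr ⟨i - p * t, by omega⟩

namespace IsBlockRotation

variable {σ : Equiv.Perm (Fin (p * t + f))} (hσ : IsBlockRotation σ)
include hσ

theorem apply_eq_self_of_not_lt {i : Fin (p * t + f)} (h : ¬ (i : ℕ) < p * t) : σ i = i :=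
  Fin.ext (by rw [hσ, if_neg h])

theorem val_pow_apply_of_lt (k : ℕ) {i : Fin (p * t + f)} (h : (i : ℕ) < p * t) :
    ((σ ^ k) i : ℕ) = p * ((i : ℕ) / p) + ((i : ℕ) % p + k) % p := by
  have hp : 0 < p := Nat.pos_of_lt_mul_right h
  induction k with
  | zero => simp [Nat.mod_eq_of_lt (Nat.mod_lt _ hp), Nat.div_add_mod]
  | succ k ih =>
    have hr : ((i : ℕ) % p + k) % p < p := Nat.mod_lt _ hp
    have hlt : ((σ ^ k) i : ℕ) < p * t := by
      have := Nat.div_lt_of_lt_mul h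
      rw [ih]; nlinarith
    rw [pow_succ', Equiv.Perm.mul_apply, hσ, if_pos hlt, ih, Nat.mul_add_div_of_lt hr,
      Nat.mul_add_mod, Nat.mod_mod, Nat.mod_add_mod, add_assoc]

theorem pow_eq_one : σ ^ p = 1 := by
  ext i
  by_cases h : (i : ℕ) < p * t
  · rw [hσ.val_pow_apply_of_lt p h, Nat.add_mod_right, Nat.mod_mod, Nat.div_add_mod,
      Equiv.Perm.one_apply]
  · rw [Equiv.Perm.pow_apply_eq_self_of_apply_eq_self (hσ.apply_eq_self_of_not_lt h),
      Equiv.Perm.one_apply]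

theorem cycleIndex_apply (i : Fin (p * t + f)) : cycleIndex p t f (σ i) = cycleIndex p t f i := by
  by_cases h : (i : ℕ) < p * t
  · have hr : ((i : ℕ) % p + 1) % p < p := Nat.mod_lt _ (Nat.pos_of_lt_mul_right h)
    have hlt : (σ i : ℕ) < p * t := by
      have := Nat.div_lt_of_lt_mul h
      rw [hσ, if_pos h]; nlinarith
    simp only [cycleIndex, dif_pos h, dif_pos hlt, Sum.inl.injEq, Fin.mk.injEq]
    rw [hσ, if_pos h, Nat.mul_add_div_of_lt hr]
  · rw [hσ.apply_eq_self_of_not_lt h]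

theorem permLinear_funLeft_cycleIndex (u : Fin t ⊕ Fin f → F) :
    permLinear σ (LinearMap.funLeft F F (cycleIndex p t f) u) =
      LinearMap.funLeft F F (cycleIndex p t f) u := by
  funext i
  simp only [permLinear_apply, LinearMap.funLeft_apply]
  rw [← hσ.cycleIndex_apply, ← Equiv.Perm.mul_apply, mul_inv_cancel, Equiv.Perm.one_apply]

/-- A fixed vector is the lift of its values at the cycle starts `p * j` and the fixed points. -/
theorem mem_range_funLeft_cycleIndex (hp : 0 < p) {x : Fin (p * t + f) → F}
    (hx : permLinear σ x = x) : x ∈ LinearMap.range (LinearMap.funLeft F F (cycleIndex p t f)) := by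
  let start : Fin t ⊕ Fin f → Fin (p * t + f) :=
    Sum.elim (fun j => ⟨p * j, by nlinarith [j.isLt]⟩) (fun j => ⟨p * t + j, by omega⟩)
  refine ⟨x ∘ start, funext fun i => ?_⟩
  simp only [LinearMap.funLeft_apply, Function.comp_apply]
  by_cases h : (i : ℕ) < p * t
  · have hi : (σ ^ ((i : ℕ) % p)) (start (cycleIndex p t f i)) = i := by
      have hs : (start (cycleIndex p t f i) : ℕ) < p * t := by
        simp only [start, cycleIndex, dif_pos h, Sum.elim_inl]
        nlinarith [Nat.div_mul_le_self (i : ℕ) p]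
      ext
      rw [hσ.val_pow_apply_of_lt _ hs]
      simp only [start, cycleIndex, dif_pos h, Sum.elim_inl]
      rw [Nat.mul_div_cancel_left _ hp, Nat.mul_mod_right, zero_add, Nat.mod_mod,
        Nat.div_add_mod]
    conv_rhs => rw [← hi, ← permLinear_pow_apply_of_fixed hx ((i : ℕ) % p)]
    simp [permLinear_apply]
  · congr 1
    ext
    simp only [start, cycleIndex, dif_neg h, Sum.elim_inr]
    omega

end IsBlockRotation

end CyclePermutation

theorem Nat.Prime.cast_ne_zero_of_ne_ringChar {R : Type*} [Ring R] [Nontrivial R] {p : ℕ}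
    (hp : p.Prime) (hchar : p ≠ ringChar R) : (p : R) ≠ 0 := by
  rw [Ne, CharP.cast_eq_zero_iff R (ringChar R)]
  intro hdvd
  rcases hp.eq_one_or_self_of_dvd _ hdvd with h | h
  · exact CharP.char_ne_one R (ringChar R) h
  · exact hchar h.symm

section EmbLast

variable {F : Type*} [Field F] {p t f : ℕ}

theorem funLeft_cycleIndex_comp_extendByZero :
    LinearMap.funLeft F F (cycleIndex p t f) ∘ₗ Function.ExtendByZero.linearMap F Sum.inr =
      embLast p t f := by
  ext y i
  simp only [LinearMap.comp_apply, LinearMap.funLeft_apply, Function.ExtendByZero.linearMap_apply,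
    cycleIndex, embLast, LinearMap.coe_mk, AddHom.coe_mk]
  by_cases h : (i : ℕ) < p * t
  · rw [dif_pos h, dif_neg (by omega), Function.extend_apply' _ _ _ (by simp)]
    rfl
  · rw [dif_neg h, dif_pos (by omega), Sum.inr_injective.extend_apply]

theorem hammingNorm_embLast [DecidableEq F] (y : Fin f → F) :
    hammingNorm (embLast p t f y) = hammingNorm y := by
  have hleft (j : Fin (p * t)) : embLast p t f y (Fin.castAdd f j) = 0 :=
    dif_neg (by simp)
  have hright (j : Fin f) : embLast p t f y (Fin.natAdd (p * t) j) = y j :=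
    (dif_pos (by simp)).trans (congrArg y (Fin.ext (by simp)))
  simp only [hammingNorm, Finset.card_filter, Fin.sum_univ_add, hleft, hright]
  simp

end EmbLast

theorem kernel_code_dim_and_distance_general
    {F : Type*} [Field F] [DecidableEq F] {p t f : ℕ}
    (hp : p.Prime) (hchar : p ≠ ringChar F)
    (σ : Equiv.Perm (Fin (p * t + f)))
    (hσ : ∀ i : Fin (p * t + f), (σ i : ℕ) =
      if (i : ℕ) < p * t then p * ((i : ℕ) / p) + (((i : ℕ) % p + 1) % p)
      else (i : ℕ))
    (C : Submodule F (Fin (p * t + f) → F))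
    (hsd : IsSelfDualWith stdB C)
    (hinv : C.map (permLinear σ) = C)
    (d : ℕ) (hd : ∀ c ∈ C, c ≠ 0 → d ≤ hammingNorm c) :
    f - t ≤ 2 * Module.finrank F (C.comap (embLast p t f) : Submodule F (Fin f → F)) ∧
    ∀ y ∈ C.comap (embLast p t f), y ≠ 0 → d ≤ hammingNorm y := by
  have hrot : IsBlockRotation σ := hσ
  set L := LinearMap.funLeft F F (cycleIndex p t f)
  have hfixed := finrank_le_two_mul_finrank_comap hsd hinv hrot.pow_eq_one
    (hp.cast_ne_zero_of_ne_ringChar hchar) L hrot.permLinear_funLeft_cycleIndex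
    (fun _ => hrot.mem_range_funLeft_cycleIndex hp.pos)
  have hkernel := (C.comap L).finrank_add_finrank_le_finrank_comap_add
    (Function.ExtendByZero.linearMap F Sum.inr)
  rw [← Submodule.comap_comp, funLeft_cycleIndex_comp_extendByZero] at hkernel
  simp only [finrank_fintype_fun_eq_card, Fintype.card_sum, Fintype.card_fin] at hfixed hkernel
  refine ⟨by omega, fun y hy hy0 => ?_⟩
  rw [← hammingNorm_embLast (p := p) (t := t)]
  refine hd _ hy ?_
  rwa [Ne, ← hammingNorm_eq_zero, hammingNorm_embLast, hammingNorm_eq_zero]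

/-- Let `p ≠ char F` be prime and `C = C^⊥ ⊆ F^(pt+f)` a self-dual code invariant
under the coordinate permutation `σ` with cycles `(1,…,p)⋯((t-1)p+1,…,tp)` and
fixed points `tp+1,…,n`.  Let `K* = {y ∈ F^f : (0,…,0,y) ∈ C}` be the code of
fixed-point parts of codewords vanishing on all cycles.  Then
`dim K* ≥ (f-t)/2`, and every nonzero word of `K*` has weight at least `d(C)`
(here `d` is a lower bound for the weights of nonzero codewords of `C`). -/
theorem kernel_code_dim_and_distance
    {F : Type*} [Field F] [Fintype F] [DecidableEq F] {p t f : ℕ}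
    (hp : p.Prime) (hchar : p ≠ ringChar F)
    (σ : Equiv.Perm (Fin (p * t + f)))
    (hσ : ∀ i : Fin (p * t + f), (σ i : ℕ) =
      if (i : ℕ) < p * t then p * ((i : ℕ) / p) + (((i : ℕ) % p + 1) % p)
      else (i : ℕ))
    (C : Submodule F (Fin (p * t + f) → F))
    (hsd : IsSelfDualWith stdB C)
    (hinv : C.map (permLinear σ) = C)
    (d : ℕ) (hd : ∀ c ∈ C, c ≠ 0 → d ≤ hammingNorm c) :
    f - t ≤ 2 * Module.finrank F (C.comap (embLast p t f) : Submodule F (Fin f → F)) ∧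
    ∀ y ∈ C.comap (embLast p t f), y ≠ 0 → d ≤ hammingNorm y :=
  kernel_code_dim_and_distance_general hp hchar σ hσ C hsd hinv d hd
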